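/- The minimum over θ of the C-DQN loss is monotonically non-increasing along the target-network iteration: if θ̃_{i+1} = argmin_θ L_CDQN(θ; θ̃_i), then min_θ L_CDQN(θ; θ̃_{i+1}) ≤ min_θ L_CDQN(θ; θ̃_i). -/

import Mathlib

/-!
Since `ℓ_DQN(θ; θ) = ℓ_MSBE(θ)`, the C-DQN loss with the target at `θ` itself is the MSBE loss,
which is below `L_CDQN(θ; θ̃)` for every target `θ̃`. Hence
`min_θ L_CDQN(θ; θ̃') ≤ L_CDQN(θ̃'; θ̃') ≤ L_CDQN(θ̃'; θ̃) = min_θ L_CDQN(θ; θ̃)`.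
-/

noncomputable def cdqnLoss {Θ D : Type*} [Fintype D] (ℓDQN : D → Θ → Θ → ℝ)
    (ℓMSBE : D → Θ → ℝ) (θ θt : Θ) : ℝ :=
  (∑ d : D, max (ℓDQN d θ θt) (ℓMSBE d θ)) / Fintype.card D

theorem cdqnLoss_self_le {Θ D : Type*} [Fintype D] {ℓDQN : D → Θ → Θ → ℝ}
    {ℓMSBE : D → Θ → ℝ} (hdiag : ∀ d θ, ℓDQN d θ θ = ℓMSBE d θ) (θ θt : Θ) :
    cdqnLoss ℓDQN ℓMSBE θ θ ≤ cdqnLoss ℓDQN ℓMSBE θ θt := by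
  refine div_le_div_of_nonneg_right (Finset.sum_le_sum fun d _ => ?_) (Nat.cast_nonneg _)
  rw [hdiag, max_self]
  exact le_max_right _ _

theorem stmt_7_general {Θ : Type*} [Fintype Θ] [Nonempty Θ]
    {D : Type*} [Fintype D]
    (ℓDQN : D → Θ → Θ → ℝ) (ℓMSBE : D → Θ → ℝ)
    (hdiag : ∀ d θ, ℓDQN d θ θ = ℓMSBE d θ)
    (L : Θ → Θ → ℝ)
    (hL : ∀ θ θt, L θ θt =
      (∑ d : D, max (ℓDQN d θ θt) (ℓMSBE d θ)) / (Fintype.card D))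
    (θt θt' : Θ)
    (hargmin : ∀ θ : Θ, L θt' θt ≤ L θ θt) :
    (⨅ θ : Θ, L θ θt') ≤ ⨅ θ : Θ, L θ θt := by
  obtain rfl : L = cdqnLoss ℓDQN ℓMSBE := funext fun θ => funext (hL θ)
  calc ⨅ θ, cdqnLoss ℓDQN ℓMSBE θ θt'
      ≤ cdqnLoss ℓDQN ℓMSBE θt' θt' := ciInf_le (Finite.bddBelow_range _) θt'
    _ ≤ cdqnLoss ℓDQN ℓMSBE θt' θt := cdqnLoss_self_le hdiag θt' θt
    _ ≤ ⨅ θ, cdqnLoss ℓDQN ℓMSBE θ θt := le_ciInf hargmin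

/-- The minimum of the C-DQN loss is non-increasing along the target-network
iteration: if `θ̃'` is an argmin of `θ ↦ L_CDQN(θ; θ̃)`, then
`min_θ L_CDQN(θ; θ̃') ≤ min_θ L_CDQN(θ; θ̃)`.  Here
`L_CDQN(θ; θ̃)` is the average over a fixed finite dataset of
`max{ℓ_DQN(θ; θ̃), ℓ_MSBE(θ)}` for nonnegative per-sample losses satisfying
the diagonal identity `ℓ_DQN(θ, θ) = ℓ_MSBE(θ)`. -/
theorem stmt_7 {Θ : Type*} [Fintype Θ] [Nonempty Θ]
    {D : Type*} [Fintype D] [Nonempty D]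
    (ℓDQN : D → Θ → Θ → ℝ) (ℓMSBE : D → Θ → ℝ)
    (hDQN0 : ∀ d θ θt, 0 ≤ ℓDQN d θ θt)
    (hMSBE0 : ∀ d θ, 0 ≤ ℓMSBE d θ)
    (hdiag : ∀ d θ, ℓDQN d θ θ = ℓMSBE d θ)
    (L : Θ → Θ → ℝ)
    (hL : ∀ θ θt, L θ θt =
      (∑ d : D, max (ℓDQN d θ θt) (ℓMSBE d θ)) / (Fintype.card D))
    (θt θt' : Θ)
    (hargmin : ∀ θ : Θ, L θt' θt ≤ L θ θt) :
    (⨅ θ : Θ, L θ θt') ≤ ⨅ θ : Θ, L θ θt :=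
  stmt_7_general ℓDQN ℓMSBE hdiag L hL θt θt' hargmin
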